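/- The gauge action on null metric hypersurface data defined by G_{(z,ζ)}(γ) = γ, G_{(z,ζ)}(ℓ) = z(ℓ + γ(ζ,·)), G_{(z,ζ)}(ℓ⁽²⁾) = z²(ℓ⁽²⁾ + 2ℓ(ζ) + γ(ζ,ζ)) is a group action: G_{(z₁,ζ₁)} ∘ G_{(z₂,ζ₂)} = G_{(z₁,ζ₁)·(z₂,ζ₂)}, where (z₂,ζ₂)·(z₁,ζ₁) = (z₂z₁, ζ₁ + z₁⁻¹ζ₂). -/
import Mathlib


open Module LinearMap

variable {N : Type*} {T : N → Type*} [∀ p, AddCommGroup (T p)] [∀ p, Module ℝ (T p)]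

/-- Gauge action on the covector field: `G_{(z,ζ)}(ℓ) = z(ℓ + γ(ζ,·))`. -/
noncomputable def gaugeL (γ : ∀ p, T p →ₗ[ℝ] T p →ₗ[ℝ] ℝ) (z : N → ℝ) (ζ : ∀ p, T p)
    (ℓ : ∀ p, Dual ℝ (T p)) : ∀ p, Dual ℝ (T p) :=
  fun p ↦ z p • (ℓ p + γ p (ζ p))

/-- Gauge action on the scalar field: `G_{(z,ζ)}(ℓ⁽²⁾) = z²(ℓ⁽²⁾ + 2ℓ(ζ) + γ(ζ,ζ))`. -/
noncomputable def gaugeL2 (γ : ∀ p, T p →ₗ[ℝ] T p →ₗ[ℝ] ℝ) (z : N → ℝ) (ζ : ∀ p, T p)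
    (ℓ : ∀ p, Dual ℝ (T p)) (l2 : N → ℝ) : N → ℝ :=
  fun p ↦ (z p) ^ 2 * (l2 p + 2 * ℓ p (ζ p) + γ p (ζ p) (ζ p))

/-- The gauge action on null metric hypersurface data (`γ` is left unchanged) is a
realization of the group `G = F*(N) × X(N)` with product
`(z₂,ζ₂)·(z₁,ζ₁) = (z₂z₁, ζ₁ + z₁⁻¹ζ₂)`:
`G_{(z₁,ζ₁)} ∘ G_{(z₂,ζ₂)} = G_{(z₁,ζ₁)·(z₂,ζ₂)}`, where
`(z₁,ζ₁)·(z₂,ζ₂) = (z₁z₂, ζ₂ + z₂⁻¹ζ₁)`. -/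
theorem gauge_action_is_group_action
    (γ : ∀ p, T p →ₗ[ℝ] T p →ₗ[ℝ] ℝ)
    (hγsym : ∀ p (x y : T p), γ p x y = γ p y x)
    (ℓ : ∀ p, Dual ℝ (T p)) (l2 : N → ℝ)
    (z₁ z₂ : N → ℝ) (hz₁ : ∀ p, z₁ p ≠ 0) (hz₂ : ∀ p, z₂ p ≠ 0)
    (ζ₁ ζ₂ : ∀ p, T p) :
    gaugeL γ z₁ ζ₁ (gaugeL γ z₂ ζ₂ ℓ)
      = gaugeL γ (fun p ↦ z₁ p * z₂ p) (fun p ↦ ζ₂ p + (z₂ p)⁻¹ • ζ₁ p) ℓ ∧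
    gaugeL2 γ z₁ ζ₁ (gaugeL γ z₂ ζ₂ ℓ) (gaugeL2 γ z₂ ζ₂ ℓ l2)
      = gaugeL2 γ (fun p ↦ z₁ p * z₂ p) (fun p ↦ ζ₂ p + (z₂ p)⁻¹ • ζ₁ p) ℓ l2 := by
  constructor
  · funext p
    ext x
    simp only [gaugeL, map_add, map_smul, LinearMap.add_apply, LinearMap.smul_apply,
      smul_eq_mul, smul_add]
    field_simp [hz₂ p]
    ring
  · funext p
    simp only [gaugeL, gaugeL2, map_add, map_smul, LinearMap.add_apply, LinearMap.smul_apply,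
      smul_eq_mul]
    rw [hγsym p (ζ₁ p) (ζ₂ p)]
    field_simp [hz₂ p]
    ring
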